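/- The subalgebra of an IFG power set algebra generated by pairs of suits consists of pairs of suits: the constants 0, 1, D_ij are pairs of suits, and if X and Y are pairs of suits then so are ∼X, X +_J Y, X ·_J Y, and C_{n,J}(X). -/

import Mathlib

/-- Two valuations agree outside `J`: they take the same values on all coordinates not in `J`. -/
def AgreeOutside {ι A : Type*} (J : Set ι) (a b : ι → A) : Prop :=
  ∀ i, i ∉ J → a i = b i

/-- `𝒰` is a `J`-saturated disjoint cover of `V`. -/
def IsSatDisjCover {ι A : Type*} (J : Set ι) (V : Set (ι → A))
    (𝒰 : Set (Set (ι → A))) : Prop :=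
  ⋃₀ 𝒰 = V ∧ 𝒰.Pairwise Disjoint ∧
    ∀ a ∈ V, ∀ b ∈ V, AgreeOutside J a b → ∀ U ∈ 𝒰, a ∈ U → b ∈ U

/-- `V = V₁ ∪_J V₂`: a `J`-saturated disjoint (binary) cover of `V`. -/
def UnionJ {ι A : Type*} (J : Set ι) (V V₁ V₂ : Set (ι → A)) : Prop :=
  V₁ ∪ V₂ = V ∧ Disjoint V₁ V₂ ∧
    ∀ a ∈ V, ∀ b ∈ V, AgreeOutside J a b →
      ((a ∈ V₁ → b ∈ V₁) ∧ (a ∈ V₂ → b ∈ V₂))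

/-- `f : V → A` is independent of `J`. -/
def IndepOf {ι A : Type*} (J : Set ι) (V : Set (ι → A)) (f : (ι → A) → A) : Prop :=
  ∀ a ∈ V, ∀ b ∈ V, AgreeOutside J a b → f a = f b

/-- `V(n:f) = { ⃗a(n : f ⃗a) : ⃗a ∈ V }`. -/
def teamUpd {ι A : Type*} [DecidableEq ι] (n : ι) (f : (ι → A) → A)
    (V : Set (ι → A)) : Set (ι → A) :=
  (fun a => Function.update a n (f a)) '' V

/-- `V(n:A) = { ⃗a(n : c) : ⃗a ∈ V, c ∈ A }`. -/
def teamExp {ι A : Type*} [DecidableEq ι] (n : ι) (V : Set (ι → A)) : Set (ι → A) :=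
  {x | ∃ a ∈ V, ∃ c : A, x = Function.update a n c}

/-- An element of an IFG cylindric power set algebra: a pair `⟨X⁺, X⁻⟩` of sets of teams. -/
abbrev IFGElem (ι A : Type*) := Set (Set (ι → A)) × Set (Set (ι → A))

/-- Negation: `∼⟨X⁺, X⁻⟩ = ⟨X⁻, X⁺⟩`. -/
def ifgNeg {ι A : Type*} (X : IFGElem ι A) : IFGElem ι A := (X.2, X.1)

/-- `{V : V = V₁ ∪_J V₂ for some V₁ ∈ S, V₂ ∈ T}`. -/
def plusPos {ι A : Type*} (J : Set ι) (S T : Set (Set (ι → A))) : Set (Set (ι → A)) :=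
  {V | ∃ V₁ ∈ S, ∃ V₂ ∈ T, UnionJ J V V₁ V₂}

/-- The operation `X +_J Y`. -/
def ifgPlus {ι A : Type*} (J : Set ι) (X Y : IFGElem ι A) : IFGElem ι A :=
  (plusPos J X.1 Y.1, X.2 ∩ Y.2)

/-- The operation `X ·_J Y`. -/
def ifgTimes {ι A : Type*} (J : Set ι) (X Y : IFGElem ι A) : IFGElem ι A :=
  (X.1 ∩ Y.1, plusPos J X.2 Y.2)

/-- The cylindrification `C_{n,J}(X)`. -/
def ifgCyl {ι A : Type*} [DecidableEq ι] (n : ι) (J : Set ι) (X : IFGElem ι A) :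
    IFGElem ι A :=
  ({V | ∃ f, IndepOf J V f ∧ teamUpd n f V ∈ X.1}, {W | teamExp n W ∈ X.2})

/-- The constant `0`. -/
def ifgZero {ι A : Type*} : IFGElem ι A := ({∅}, Set.univ)

/-- The constant `1`. -/
def ifgOne {ι A : Type*} : IFGElem ι A := (Set.univ, {∅})

/-- The diagonal element `D_{ij}`. -/
def ifgD {ι A : Type*} (i j : ι) : IFGElem ι A :=
  ({V | ∀ a ∈ V, a i = a j}, {V | ∀ a ∈ V, a i ≠ a j})

/-- A suit: a nonempty collection of teams closed under subsets. -/
def IsSuit {ι A : Type*} (S : Set (Set (ι → A))) : Prop :=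
  S.Nonempty ∧ ∀ V ∈ S, ∀ V' ⊆ V, V' ∈ S

/-- A pair of suits. -/
def IsPairOfSuits {ι A : Type*} (X : IFGElem ι A) : Prop :=
  IsSuit X.1 ∧ IsSuit X.2

/-- A double suit: a pair of suits with `X⁺ ∩ X⁻ = {∅}`. -/
def IsDoubleSuit {ι A : Type*} (X : IFGElem ι A) : Prop :=
  IsPairOfSuits X ∧ X.1 ∩ X.2 = {∅}
/-!
Every component of the constants is `{∅}`, everything, or a powerset, hence a suit. Suits are
closed under intersection. A `J`-saturated disjoint cover `V = V₁ ∪_J V₂` restricts to one of any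
`W ⊆ V` by intersecting both parts with `W`, so `plusPos` of two suits is again a suit; and
cylindrification pulls suits back along the team maps `V ↦ V(n:f)` and `W ↦ W(n:A)`, which are
monotone and send `∅` to `∅`.
-/

section Suits

variable {ι A : Type*}

lemma IsSuit.empty_mem {S : Set (Set (ι → A))} (h : IsSuit S) : ∅ ∈ S :=
  let ⟨⟨V, hV⟩, hdown⟩ := h
  hdown V hV ∅ (Set.empty_subset V)

lemma isSuit_singleton_empty : IsSuit ({∅} : Set (Set (ι → A))) :=
  ⟨⟨∅, rfl⟩, fun _ hV _ hV' => Set.subset_empty_iff.mp (hV ▸ hV')⟩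

lemma isSuit_univ : IsSuit (Set.univ : Set (Set (ι → A))) :=
  ⟨⟨∅, trivial⟩, fun _ _ _ _ => trivial⟩

lemma isSuit_powerset (s : Set (ι → A)) : IsSuit (𝒫 s) :=
  ⟨⟨∅, Set.empty_subset s⟩, fun _ hV _ hV' => hV'.trans hV⟩

lemma IsSuit.inter {S T : Set (Set (ι → A))} (hS : IsSuit S) (hT : IsSuit T) :
    IsSuit (S ∩ T) :=
  ⟨⟨∅, hS.empty_mem, hT.empty_mem⟩,
    fun V hV V' hV' => ⟨hS.2 V hV.1 V' hV', hT.2 V hV.2 V' hV'⟩⟩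

lemma isSuit_setOf_mem_of_monotone {S : Set (Set (ι → A))} (hS : IsSuit S)
    {F : Set (ι → A) → Set (ι → A)} (hF : Monotone F) (hF₀ : F ∅ = ∅) :
    IsSuit {W | F W ∈ S} :=
  ⟨⟨∅, show F ∅ ∈ S by rw [hF₀]; exact hS.empty_mem⟩,
    fun _ hW _ hW' => hS.2 _ hW _ (hF hW')⟩

end Suits

section Covers

variable {ι A : Type*} {J : Set ι}

lemma unionJ_empty : UnionJ J (∅ : Set (ι → A)) ∅ ∅ :=
  ⟨Set.union_empty ∅, disjoint_bot_left, fun _ ha => absurd ha (Set.notMem_empty _)⟩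

lemma UnionJ.inter_of_subset {V V₁ V₂ W : Set (ι → A)} (h : UnionJ J V V₁ V₂) (hW : W ⊆ V) :
    UnionJ J W (V₁ ∩ W) (V₂ ∩ W) := by
  obtain ⟨hunion, hdisj, hsat⟩ := h
  refine ⟨?_, hdisj.mono Set.inter_subset_left Set.inter_subset_left, ?_⟩
  · rw [← Set.union_inter_distrib_right, hunion, Set.inter_eq_right.mpr hW]
  · intro a ha b hb hab
    have hab' := hsat a (hW ha) b (hW hb) hab
    exact ⟨fun h₁ => ⟨hab'.1 h₁.1, hb⟩, fun h₂ => ⟨hab'.2 h₂.1, hb⟩⟩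

lemma IsSuit.plusPos {S T : Set (Set (ι → A))} (hS : IsSuit S) (hT : IsSuit T) :
    IsSuit (plusPos J S T) := by
  refine ⟨⟨∅, ∅, hS.empty_mem, ∅, hT.empty_mem, unionJ_empty⟩, ?_⟩
  rintro V ⟨V₁, hV₁, V₂, hV₂, hcover⟩ W hW
  exact ⟨V₁ ∩ W, hS.2 V₁ hV₁ _ Set.inter_subset_left,
    V₂ ∩ W, hT.2 V₂ hV₂ _ Set.inter_subset_left, hcover.inter_of_subset hW⟩

lemma IndepOf.mono {V W : Set (ι → A)} {f : (ι → A) → A} (hf : IndepOf J W f)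
    (hVW : V ⊆ W) : IndepOf J V f :=
  fun a ha b hb hab => hf a (hVW ha) b (hVW hb) hab

end Covers

section Cylindrification

variable {ι A : Type*} [DecidableEq ι] {n : ι}

lemma teamUpd_mono (f : (ι → A) → A) : Monotone (teamUpd n f) :=
  fun _ _ hVW => Set.image_mono hVW

lemma teamExp_mono : Monotone (teamExp (A := A) n) :=
  fun _ _ hVW _ ⟨a, ha, c, hx⟩ => ⟨a, hVW ha, c, hx⟩

lemma teamExp_empty : teamExp n (∅ : Set (ι → A)) = ∅ :=
  Set.eq_empty_of_forall_notMem fun _ ⟨_, ha, _⟩ => ha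

lemma IsSuit.setOf_exists_indepOf_teamUpd_mem (J : Set ι) {S : Set (Set (ι → A))}
    (hS : IsSuit S) : IsSuit {V | ∃ f, IndepOf J V f ∧ teamUpd n f V ∈ S} := by
  refine ⟨⟨∅, fun a => a n, fun _ ha => absurd ha (Set.notMem_empty _), ?_⟩, ?_⟩
  · simpa only [teamUpd, Set.image_empty] using hS.empty_mem
  · rintro V ⟨f, hf, hfV⟩ W hW
    exact ⟨f, hf.mono hW, hS.2 _ hfV _ (teamUpd_mono f hW)⟩

end Cylindrification

/-- The constants are pairs of suits and the operations preserve pairs of suits; hence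
the subalgebra generated by pairs of suits consists of pairs of suits. -/
theorem pairsOfSuits_closed {ι A : Type*} [DecidableEq ι] :
    IsPairOfSuits (ifgZero : IFGElem ι A) ∧
    IsPairOfSuits (ifgOne : IFGElem ι A) ∧
    (∀ i j : ι, IsPairOfSuits (ifgD i j : IFGElem ι A)) ∧
    (∀ X : IFGElem ι A, IsPairOfSuits X → IsPairOfSuits (ifgNeg X)) ∧
    (∀ (J : Set ι) (X Y : IFGElem ι A), IsPairOfSuits X → IsPairOfSuits Y →
      IsPairOfSuits (ifgPlus J X Y)) ∧
    (∀ (J : Set ι) (X Y : IFGElem ι A), IsPairOfSuits X → IsPairOfSuits Y →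
      IsPairOfSuits (ifgTimes J X Y)) ∧
    (∀ (n : ι) (J : Set ι) (X : IFGElem ι A), IsPairOfSuits X →
      IsPairOfSuits (ifgCyl n J X)) := by
  refine ⟨⟨isSuit_singleton_empty, isSuit_univ⟩, ⟨isSuit_univ, isSuit_singleton_empty⟩,
    fun i j => ⟨isSuit_powerset {a | a i = a j}, isSuit_powerset {a | a i ≠ a j}⟩,
    fun X hX => ⟨hX.2, hX.1⟩, ?_, ?_, ?_⟩
  · exact fun J X Y hX hY => ⟨hX.1.plusPos hY.1, hX.2.inter hY.2⟩
  · exact fun J X Y hX hY => ⟨hX.1.inter hY.1, hX.2.plusPos hY.2⟩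
  · exact fun n J X hX => ⟨hX.1.setOf_exists_indepOf_teamUpd_mem J,
      isSuit_setOf_mem_of_monotone hX.2 teamExp_mono teamExp_empty⟩
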